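/- Let G be a graph with pendent generalized star R with ℓ legs and center c. If c belongs to some minimal zero forcing set S of G, then S ∩ V(R) consists of c together with either ℓ − 1 or ℓ neighbors of c on R, each of which has degree two. -/
import Mathlib


namespace ZF

variable {V : Type*}

/-- The set of vertices forced blue starting from `S`, under the standard color change
rule: a blue vertex with exactly one white neighbor forces that neighbor blue. -/
inductive Forced (G : SimpleGraph V) (S : Set V) : V → Prop
  | init {v : V} : v ∈ S → Forced G S v
  | force {u w : V} : Forced G S u → G.Adj u w →
      (∀ x, G.Adj u x → x ≠ w → Forced G S x) → Forced G S w

/-- `S` is a zero forcing set of `G`. -/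
def IsZFS (G : SimpleGraph V) (S : Set V) : Prop := ∀ v, Forced G S v

/-- `S` is a minimal zero forcing set of `G`. -/
def IsMinimalZFS (G : SimpleGraph V) (S : Set V) : Prop :=
  IsZFS G S ∧ ∀ S' ⊂ S, ¬ IsZFS G S'

/-- The zero forcing number of `G`. -/
noncomputable def zfNum (G : SimpleGraph V) : ℕ :=
  sInf {n | ∃ S : Set V, IsZFS G S ∧ S.ncard = n}

/-- A graph is well-forced if every minimal zero forcing set is minimum. -/
def WellForced (G : SimpleGraph V) : Prop :=
  ∀ S, IsMinimalZFS G S → S.ncard = zfNum G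

/-- Degree of a vertex (as the `ncard` of its neighbor set). -/
noncomputable def deg (G : SimpleGraph V) (v : V) : ℕ := (G.neighborSet v).ncard

end ZF

open ZF SimpleGraph

/-- A structure witnessing that `G` contains a pendent generalized star with center `c`
and `ℓ ≥ 2` legs: `c` is a vertex of degree at least 3 in `G`, and the legs are `ℓ`
pairwise disjoint components of `G - c` that are pendent paths at `c`.  The `i`-th leg
is the path `leg i 0, …, leg i (len i - 1)`, attached to `c` at `leg i 0`, whose
internal vertices have degree 2 in `G` and whose end vertex has degree 1 in `G`.
The length of the `i`-th leg is `len i`. -/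
structure PendentStar {V : Type*} (G : SimpleGraph V) (c : V) (ℓ : ℕ) where
  two_le : 2 ≤ ℓ
  deg_center : 3 ≤ deg G c
  len : Fin ℓ → ℕ
  len_pos : ∀ i, 1 ≤ len i
  leg : Fin ℓ → ℕ → V
  ne_center : ∀ i j, j < len i → leg i j ≠ c
  inj : ∀ i j i' j', j < len i → j' < len i' → leg i j = leg i' j' → i = i' ∧ j = j'
  adj_center : ∀ i, G.Adj c (leg i 0)
  adj_chain : ∀ i j, j + 1 < len i → G.Adj (leg i j) (leg i (j + 1))
  deg_mid : ∀ i j, j + 1 < len i → deg G (leg i j) = 2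
  deg_last : ∀ i, deg G (leg i (len i - 1)) = 1

/-- The vertex set of a pendent generalized star. -/
def PendentStar.verts {V : Type*} {G : SimpleGraph V} {c : V} {ℓ : ℕ}
    (R : PendentStar G c ℓ) : Set V :=
  {c} ∪ {v | ∃ i j, j < R.len i ∧ R.leg i j = v}

set_option linter.unusedSectionVars false

section Aux
variable {V : Type*} [Fintype V]

lemma forced_mono {G : SimpleGraph V} {S T : Set V} (h : ∀ s ∈ S, Forced G T s) :
    ∀ v, Forced G S v → Forced G T v := by
  intro v hv
  induction hv with
  | init hx => exact h _ hx
  | force hu ha hs ihu ihs => exact Forced.force ihu ha ihs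

lemma kill_aux {G : SimpleGraph V} {S : Set V} (hZ : IsMinimalZFS G S) {a : V}
    (ha : a ∈ S) (h : Forced G (S \ {a}) a) : False := by
  refine hZ.2 (S \ {a}) (Set.sdiff_singleton_ssubset.mpr ha) ?_
  intro v
  refine forced_mono ?_ v (hZ.1 v)
  intro s hs
  by_cases hsa : s = a
  · exact hsa ▸ h
  · exact Forced.init ⟨hs, hsa⟩

lemma nbr_pair {G : SimpleGraph V} {x a b : V} (hab : a ≠ b)
    (ha : G.Adj x a) (hb : G.Adj x b) (hdeg : deg G x = 2) :
    G.neighborSet x = {a, b} := by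
  symm
  refine Set.eq_of_subset_of_ncard_le ?_ ?_ (Set.toFinite _)
  · rintro y (rfl | rfl) <;> assumption
  · rw [Set.ncard_pair hab]; exact le_of_eq hdeg

lemma nbr_single {G : SimpleGraph V} {x a : V}
    (ha : G.Adj x a) (hdeg : deg G x = 1) :
    G.neighborSet x = {a} := by
  symm
  refine Set.eq_of_subset_of_ncard_le ?_ ?_ (Set.toFinite _)
  · rintro y rfl; exact ha
  · rw [Set.ncard_singleton]; exact le_of_eq hdeg

variable {G : SimpleGraph V} {c : V} {m : ℕ} {v : ℕ → V}

lemma path_nbr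
    (hvc : ∀ j, j < m → v j ≠ c)
    (hinj : ∀ j j', j < m → j' < m → v j = v j' → j = j')
    (hadj0 : G.Adj c (v 0))
    (hchain : ∀ j, j + 1 < m → G.Adj (v j) (v (j + 1)))
    (hmid : ∀ j, j + 1 < m → deg G (v j) = 2)
    (hlast : deg G (v (m - 1)) = 1) :
    ∀ j, j < m → ∀ y, G.Adj (v j) y →
      (j = 0 ∧ y = c) ∨ ∃ k, k < m ∧ y = v k ∧ (k = j + 1 ∨ k + 1 = j) := by
  intro j hj y hy
  by_cases hj1 : j + 1 < m
  · rcases Nat.eq_zero_or_pos j with rfl | hj0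
    · have hset := nbr_pair (a := c) (b := v 1) (fun h => hvc 1 hj1 h.symm)
        hadj0.symm (hchain 0 hj1) (hmid 0 hj1)
      have : y ∈ G.neighborSet (v 0) := hy
      rw [hset] at this
      rcases this with rfl | rfl
      · exact Or.inl ⟨rfl, rfl⟩
      · exact Or.inr ⟨1, hj1, rfl, Or.inl rfl⟩
    · obtain ⟨jj, rfl⟩ : ∃ jj, j = jj + 1 := ⟨j - 1, by omega⟩
      have hne : v jj ≠ v (jj + 2) := fun h => by
        have := hinj jj (jj + 2) (by omega) (by omega) h; omega
      have hset := nbr_pair hne ((hchain jj (by omega)).symm)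
        (hchain (jj + 1) hj1) (hmid (jj + 1) hj1)
      have : y ∈ G.neighborSet (v (jj + 1)) := hy
      rw [hset] at this
      rcases this with rfl | rfl
      · exact Or.inr ⟨jj, by omega, rfl, Or.inr rfl⟩
      · exact Or.inr ⟨jj + 2, hj1, rfl, Or.inl rfl⟩
  · rcases Nat.eq_zero_or_pos j with rfl | hj0
    · have hm1 : m = 1 := by omega
      have hset := nbr_single hadj0.symm (by simpa [hm1] using hlast)
      have : y ∈ G.neighborSet (v 0) := hy
      rw [hset] at this
      exact Or.inl ⟨rfl, this⟩
    · obtain ⟨jj, rfl⟩ : ∃ jj, j = jj + 1 := ⟨j - 1, by omega⟩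
      have hset := nbr_single ((hchain jj (by omega)).symm)
        (by rw [show m - 1 = jj + 1 by omega] at hlast; exact hlast)
      have : y ∈ G.neighborSet (v (jj + 1)) := hy
      rw [hset] at this
      exact Or.inr ⟨jj, by omega, this, Or.inr rfl⟩

lemma path_down
    (hvc : ∀ j, j < m → v j ≠ c)
    (hinj : ∀ j j', j < m → j' < m → v j = v j' → j = j')
    (hadj0 : G.Adj c (v 0))
    (hchain : ∀ j, j + 1 < m → G.Adj (v j) (v (j + 1)))
    (hmid : ∀ j, j + 1 < m → deg G (v j) = 2)
    (hlast : deg G (v (m - 1)) = 1)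
    (T : Set V) :
    ∀ k, k < m → Forced G T (v k) → (k + 1 < m → Forced G T (v (k + 1))) →
      ∀ j, j ≤ k → Forced G T (v j) := by
  intro k
  induction k with
  | zero => intro _ h1 _ j hj; simpa [Nat.le_zero.mp hj] using h1
  | succ k ih =>
    intro hk h1 h2 j hj
    have hvk : Forced G T (v k) := by
      refine Forced.force h1 ((hchain k hk).symm) ?_
      intro x hx hxw
      rcases path_nbr hvc hinj hadj0 hchain hmid hlast (k+1) hk x hx with
        ⟨hk0, rfl⟩ | ⟨k', hk', rfl, hor⟩
      · omega
      · rcases hor with rfl | hsum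
        · exact h2 hk'
        · exact absurd (congrArg v (by omega : k' = k)) hxw
    rcases Nat.lt_or_ge j (k + 1) with hj' | hj'
    · exact ih (by omega) hvk (fun _ => h1) j (by omega)
    · have : j = k + 1 := by omega
      exact this ▸ h1

lemma path_to_c
    (hm : 1 ≤ m)
    (hvc : ∀ j, j < m → v j ≠ c)
    (hinj : ∀ j j', j < m → j' < m → v j = v j' → j = j')
    (hadj0 : G.Adj c (v 0))
    (hchain : ∀ j, j + 1 < m → G.Adj (v j) (v (j + 1)))
    (hmid : ∀ j, j + 1 < m → deg G (v j) = 2)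
    (hlast : deg G (v (m - 1)) = 1)
    (T : Set V) (h0 : Forced G T (v 0)) (h1 : 1 < m → Forced G T (v 1)) :
    Forced G T c := by
  refine Forced.force h0 hadj0.symm ?_
  intro x hx hxc
  rcases path_nbr hvc hinj hadj0 hchain hmid hlast 0 hm x hx with
    ⟨_, rfl⟩ | ⟨k, hk, rfl, hor⟩
  · exact absurd rfl hxc
  · rcases hor with rfl | h
    · exact h1 hk
    · omega

lemma path_len2
    (hm : 1 ≤ m)
    (hvc : ∀ j, j < m → v j ≠ c)
    (hinj : ∀ j j', j < m → j' < m → v j = v j' → j = j')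
    (hadj0 : G.Adj c (v 0))
    (hchain : ∀ j, j + 1 < m → G.Adj (v j) (v (j + 1)))
    (hmid : ∀ j, j + 1 < m → deg G (v j) = 2)
    (hlast : deg G (v (m - 1)) = 1)
    {S : Set V} (hZ : IsMinimalZFS G S) (hc : c ∈ S) (h0 : v 0 ∈ S) : 2 ≤ m := by
  by_contra h
  exact kill_aux hZ hc (path_to_c hm hvc hinj hadj0 hchain hmid hlast (S \ {c})
    (Forced.init ⟨h0, hvc 0 hm⟩) (fun h1 => absurd h1 (by omega)))

lemma path_interior
    (hm : 1 ≤ m)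
    (hvc : ∀ j, j < m → v j ≠ c)
    (hinj : ∀ j j', j < m → j' < m → v j = v j' → j = j')
    (hadj0 : G.Adj c (v 0))
    (hchain : ∀ j, j + 1 < m → G.Adj (v j) (v (j + 1)))
    (hmid : ∀ j, j + 1 < m → deg G (v j) = 2)
    (hlast : deg G (v (m - 1)) = 1)
    {S : Set V} (hZ : IsMinimalZFS G S) (hc : c ∈ S) :
    ∀ q, 1 ≤ q → q < m → v q ∉ S := by
  classical
  intro q0 hq01 hq0m hq0S
  have N := path_nbr hvc hinj hadj0 hchain hmid hlast
  set P : ℕ → Prop := fun k => 1 ≤ k ∧ k < m ∧ v k ∈ S with hP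
  have hPq0 : P q0 := ⟨hq01, hq0m, hq0S⟩
  obtain ⟨q, hq1, hqm, hqS, hqmax⟩ :
      ∃ q, 1 ≤ q ∧ q < m ∧ v q ∈ S ∧ ∀ k, q < k → k < m → v k ∉ S := by
    refine ⟨Nat.findGreatest P (m - 1), ?_⟩
    obtain ⟨h1, h2, h3⟩ := Nat.findGreatest_spec (n := m - 1) (by omega : q0 ≤ m - 1) hPq0
    exact ⟨h1, h2, h3, fun k hk1 hk2 hkS =>
      Nat.findGreatest_is_greatest hk1 (by omega) ⟨by omega, hk2, hkS⟩⟩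
  by_cases hqend : q + 1 = m
  · have hdown := path_down hvc hinj hadj0 hchain hmid hlast (S \ {c}) q hqm
      (Forced.init ⟨hqS, hvc q hqm⟩) (fun h => absurd h (by omega))
    exact kill_aux hZ hc (path_to_c hm hvc hinj hadj0 hchain hmid hlast _
      (hdown 0 (by omega)) (fun _ => hdown 1 (by omega)))
  have hq2m : q + 2 ≤ m := by omega
  obtain ⟨t, rfl⟩ : ∃ t, q = t + 1 := ⟨q - 1, by omega⟩
  by_cases htS : v t ∈ S
  · have hdown := path_down hvc hinj hadj0 hchain hmid hlast (S \ {c}) t (by omega)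
      (Forced.init ⟨htS, hvc t (by omega)⟩)
      (fun _ => Forced.init ⟨hqS, hvc (t + 1) (by omega)⟩)
    refine kill_aux hZ hc (path_to_c hm hvc hinj hadj0 hchain hmid hlast _
      (hdown 0 (by omega)) ?_)
    intro h1m
    rcases Nat.eq_zero_or_pos t with rfl | ht0
    · exact Forced.init ⟨hqS, hvc 1 (by omega)⟩
    · exact hdown 1 (by omega)
  -- main case: big induction
  obtain ⟨pd, hadjpd, hpdspec, hpdU⟩ :
      ∃ p, G.Adj (v t) p ∧ (∀ y, G.Adj (v t) y → y = p ∨ y = v (t + 1)) ∧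
        (∀ k, t + 1 ≤ k → k < m → p ≠ v k) := by
    rcases Nat.eq_zero_or_pos t with rfl | ht0
    · refine ⟨c, hadj0.symm, ?_, fun k hk1 hk2 h => hvc k hk2 h.symm⟩
      intro y hy
      rcases N 0 (by omega) y hy with ⟨_, rfl⟩ | ⟨k, hk, rfl, hor⟩
      · exact Or.inl rfl
      · rcases hor with rfl | h
        · exact Or.inr rfl
        · omega
    · obtain ⟨s, rfl⟩ : ∃ s, t = s + 1 := ⟨t - 1, by omega⟩
      refine ⟨v s, (hchain s (by omega)).symm, ?_, ?_⟩
      · intro y hy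
        rcases N (s + 1) (by omega) y hy with ⟨h0, _⟩ | ⟨k, hk, rfl, hor⟩
        · omega
        · rcases hor with rfl | h
          · exact Or.inr rfl
          · exact Or.inl (congrArg v (by omega : k = s))
      · intro k hk1 hk2 h
        have := hinj s k (by omega) hk2 h; omega
  set S' : Set V := S \ {v (t + 1)} with hS'def
  have key : ∀ x, Forced G S x →
      ((∀ j, t + 1 ≤ j → j < m → x ≠ v j) → Forced G S' x)
      ∧ (∀ j, t + 1 < j → j < m → x = v j → Forced G S' (v t) ∧ Forced G S' pd)
      ∧ (x = v t → Forced G S' pd) := by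
    intro x hx
    induction hx with
    | init hxS =>
      refine ⟨fun hU => Forced.init ⟨hxS, fun h => hU (t + 1) le_rfl (by omega) h⟩, ?_, ?_⟩
      · intro j hj1 hj2 hxe
        exact absurd (hxe ▸ hxS) (hqmax j (by omega) hj2)
      · intro h
        exact absurd (h ▸ hxS) htS
    | @force u w hu ha hs ihu ihs =>
      refine ⟨?_, ?_, ?_⟩
      · -- clause 1
        intro hwU
        by_cases huU : ∃ j, t + 1 ≤ j ∧ j < m ∧ u = v j
        · obtain ⟨j, hj1, hj2, rfl⟩ := huU
          rcases N j hj2 w ha with ⟨hj0, _⟩ | ⟨k, hk, rfl, hor⟩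
          · omega
          · have hkq : ¬ (t + 1 ≤ k) := fun h => hwU k h hk rfl
            obtain ⟨h1, h2⟩ : j = t + 1 ∧ k = t := by rcases hor with h | h <;> omega
            subst h1
            have hside : G.Adj (v (t + 1)) (v (t + 2)) := hchain (t + 1) (by omega)
            have hne : v (t + 2) ≠ v k := fun h => by
              have := hinj (t + 2) k (by omega) hk h; omega
            have hres := ((ihs (v (t + 2)) hside hne).2.1 (t + 2) (by omega) (by omega) rfl).1
            rw [show v k = v t from congrArg v h2]
            exact hres
        · push_neg at huU
          have hPu : Forced G S' u := ihu.1 huU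
          by_cases hxU : ∀ x, G.Adj u x → x ≠ w → ∀ j, t + 1 ≤ j → j < m → x ≠ v j
          · exact Forced.force hPu ha (fun x hx hxw => (ihs x hx hxw).1 (hxU x hx hxw))
          · push_neg at hxU
            obtain ⟨x, hxadj, hxw, j, hj1, hj2, rfl⟩ := hxU
            rcases N j hj2 u hxadj.symm with ⟨hj0, _⟩ | ⟨k, hk, rfl, hor⟩
            · omega
            · have hkt : ¬ (t + 1 ≤ k) := fun h => huU k h hk rfl
              have hkeq : k = t := by rcases hor with h | h <;> omega
              rcases hpdspec w (congrArg v hkeq ▸ ha) with rfl | rfl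
              · exact ihu.2.2 (congrArg v hkeq)
              · exact absurd rfl (hwU (t + 1) le_rfl (by omega))
      · -- clause 2
        intro j hj1 hj2 hw
        rcases N j hj2 u (hw ▸ ha.symm) with ⟨hj0, _⟩ | ⟨k, hk, rfl, hor⟩
        · omega
        · rcases hor with rfl | hk1
          · exact ihu.2.1 (j + 1) (by omega) hk rfl
          · by_cases hkq : t + 1 < k
            · exact ihu.2.1 k (by omega) hk rfl
            · have hkeq : k = t + 1 := by omega
              subst hkeq
              have hadjt : G.Adj (v (t + 1)) (v t) := (hchain t (by omega)).symm
              have hne : v t ≠ w := by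
                rw [hw]; intro h
                have := hinj t j (by omega) hj2 h; omega
              have hih := ihs (v t) hadjt hne
              refine ⟨hih.1 ?_, hih.2.2 rfl⟩
              intro k' hk1' hk2' h
              have := hinj t k' (by omega) hk2' h; omega
      · -- clause 3
        intro hw
        rcases hpdspec u (hw ▸ ha.symm) with rfl | rfl
        · exact ihu.1 hpdU
        · have hside : G.Adj (v (t + 1)) (v (t + 2)) := hchain (t + 1) (by omega)
          have hne : v (t + 2) ≠ w := by
            rw [hw]; intro h
            have := hinj (t + 2) t (by omega) (by omega) h; omega
          exact ((ihs (v (t + 2)) hside hne).2.1 (t + 2) (by omega) (by omega) rfl).2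
  have hPt : Forced G S' (v t) := (key _ (hZ.1 (v t))).1 (by
    intro k hk1 hk2 h
    have := hinj t k (by omega) hk2 h; omega)
  have hPpd : Forced G S' pd := (key _ (hZ.1 pd)).1 hpdU
  have hPq : Forced G S' (v (t + 1)) := by
    refine Forced.force hPt (hchain t (by omega)) ?_
    intro x hx hxw
    rcases hpdspec x hx with rfl | rfl
    · exact hPpd
    · exact absurd rfl hxw
  exact kill_aux hZ hqS hPq
end Aux

lemma two_legs {V : Type*} [Fintype V] {G : SimpleGraph V} {c : V} {ℓ : ℕ}
    (R : PendentStar G c ℓ) {S : Set V} (hZ : IsZFS G S) {i i' : Fin ℓ} (hne : i ≠ i')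
    (h1 : ∀ j, j < R.len i → R.leg i j ∉ S) (h2 : ∀ j, j < R.len i' → R.leg i' j ∉ S) :
    False := by
  have Ni := path_nbr (fun j hj => R.ne_center i j hj)
    (fun j j' hj hj' h => (R.inj i j i j' hj hj' h).2) (R.adj_center i)
    (R.adj_chain i) (R.deg_mid i) (R.deg_last i)
  have Ni' := path_nbr (fun j hj => R.ne_center i' j hj)
    (fun j j' hj hj' h => (R.inj i' j i' j' hj hj' h).2) (R.adj_center i')
    (R.adj_chain i') (R.deg_mid i') (R.deg_last i')
  have key : ∀ x, Forced G S x →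
      (∀ j, j < R.len i → x ≠ R.leg i j) ∧ (∀ j, j < R.len i' → x ≠ R.leg i' j) := by
    intro x hx
    induction hx with
    | init hxS =>
      exact ⟨fun j hj h => h1 j hj (h ▸ hxS), fun j hj h => h2 j hj (h ▸ hxS)⟩
    | @force u w hu ha hs ihu ihs =>
      constructor
      · intro j hj hw
        rcases Ni j hj u (hw ▸ ha.symm) with ⟨hj0, huc⟩ | ⟨k, hk, rfl, _⟩
        · have hadj : G.Adj u (R.leg i' 0) := huc.symm ▸ R.adj_center i'
          have hxw : R.leg i' 0 ≠ w := by
            rw [hw, hj0]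
            intro h
            exact hne ((R.inj i' 0 i 0 (R.len_pos i') (R.len_pos i) h).1).symm
          exact (ihs _ hadj hxw).2 0 (R.len_pos i') rfl
        · exact ihu.1 k hk rfl
      · intro j hj hw
        rcases Ni' j hj u (hw ▸ ha.symm) with ⟨hj0, huc⟩ | ⟨k, hk, rfl, _⟩
        · have hadj : G.Adj u (R.leg i 0) := huc.symm ▸ R.adj_center i
          have hxw : R.leg i 0 ≠ w := by
            rw [hw, hj0]
            intro h
            exact hne (R.inj i 0 i' 0 (R.len_pos i) (R.len_pos i') h).1
          exact (ihs _ hadj hxw).1 0 (R.len_pos i) rfl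
        · exact ihu.2 k hk rfl
  exact (key _ (hZ (R.leg i 0))).1 0 (R.len_pos i) rfl

/-- Let `G` be a graph with pendent generalized star `R` with `ℓ` legs and
center `c`.  If `c` belongs to some minimal zero forcing set `S` of `G`, then
`S ∩ V(R)` consists of `c` together with either `ℓ - 1` or `ℓ` neighbors of `c` on `R`,
each of which has degree two. -/
theorem pendentstar_center_in_minimal {V : Type*} [Fintype V] (G : SimpleGraph V)
    (c : V) (ℓ : ℕ) (R : PendentStar G c ℓ) (S : Set V)
    (hS : IsMinimalZFS G S) (hc : c ∈ S) :
    ∃ I : Set (Fin ℓ), (I.ncard = ℓ - 1 ∨ I.ncard = ℓ) ∧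
      S ∩ R.verts = {c} ∪ ((fun i => R.leg i 0) '' I) ∧
      ∀ i ∈ I, deg G (R.leg i 0) = 2 := by
  classical
  set I : Set (Fin ℓ) := {i | R.leg i 0 ∈ S} with hI
  have hvc : ∀ i : Fin ℓ, ∀ j, j < R.len i → R.leg i j ≠ c := fun i j hj => R.ne_center i j hj
  have hinj : ∀ i : Fin ℓ, ∀ j j', j < R.len i → j' < R.len i → R.leg i j = R.leg i j' → j = j' :=
    fun i j j' hj hj' h => (R.inj i j i j' hj hj' h).2
  have hint : ∀ i : Fin ℓ, ∀ j, 1 ≤ j → j < R.len i → R.leg i j ∉ S :=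
    fun i => path_interior (R.len_pos i) (hvc i) (hinj i) (R.adj_center i)
      (R.adj_chain i) (R.deg_mid i) (R.deg_last i) hS hc
  have hlegfree : ∀ i : Fin ℓ, i ∉ I → ∀ j, j < R.len i → R.leg i j ∉ S := by
    intro i hi j hj hjS
    rcases Nat.eq_zero_or_pos j with rfl | hj0
    · exact hi hjS
    · exact hint i j hj0 hj hjS
  have hsub : Iᶜ.Subsingleton := by
    intro i hi i' hi'
    by_contra hne
    exact two_legs R hS.1 hne (hlegfree i hi) (hlegfree i' hi')
  have hcard : I.ncard = ℓ - 1 ∨ I.ncard = ℓ := by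
    have h1 : I.ncard + Iᶜ.ncard = ℓ := by
      have h := Set.ncard_add_ncard_compl I
      rwa [Nat.card_eq_fintype_card, Fintype.card_fin] at h
    have h2 : Iᶜ.ncard ≤ 1 := (Set.ncard_le_one_iff (Set.toFinite _)).mpr
      (fun ha hb => hsub ha hb)
    omega
  refine ⟨I, hcard, ?_, ?_⟩
  · ext x
    constructor
    · rintro ⟨hxS, rfl | ⟨i, j, hj, rfl⟩⟩
      · exact Or.inl rfl
      · rcases Nat.eq_zero_or_pos j with rfl | hj0
        · exact Or.inr ⟨i, hxS, rfl⟩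
        · exact absurd hxS (hint i j hj0 hj)
    · rintro (rfl | ⟨i, hiI, rfl⟩)
      · exact ⟨hc, Or.inl rfl⟩
      · exact ⟨hiI, Or.inr ⟨i, 0, R.len_pos i, rfl⟩⟩
  · intro i hiI
    have h2m : 2 ≤ R.len i := path_len2 (R.len_pos i) (hvc i) (hinj i) (R.adj_center i)
      (R.adj_chain i) (R.deg_mid i) (R.deg_last i) hS hc hiI
    exact R.deg_mid i 0 (by omega)
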